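/- Let p, q ≥ 1 be coprime integers with p + q ≥ 3 and let f = x^p·y^q ∈ ℂ[x,y]. Then C(f) = J_f/D_f is a free ℂ[t]-module of rank 1 generated by the class of x^{2p−1}·y^{2q−1}: for every h ∈ J_f there exists a unique polynomial P ∈ ℂ[t] such that h − P(f)·x^{2p−1}·y^{2q−1} ∈ D_f. -/

import Mathlib

open MvPolynomial

/-- Membership in `D_f = {f_x·∂g/∂y − f_y·∂g/∂x : g ∈ ℂ[x,y]}`. -/
def Dmem (f w : MvPolynomial (Fin 2) ℂ) : Prop :=
  ∃ g : MvPolynomial (Fin 2) ℂ,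
    w = pderiv 0 f * pderiv 1 g - pderiv 1 f * pderiv 0 g

/-!
For `f = x^p y^q` the operator `D_f` is diagonal on monomials:
`D_f(x^a y^b) = (pb - qa) x^{a+p-1} y^{b+q-1}`. So `D_f` is spanned by the monomials `x^m y^n`
with `m ≥ p - 1`, `n ≥ q - 1` off the resonant line `p(n+1) = q(m+1)`, and contains no monomial
on it. By coprimality the resonant monomials are the `x^{jp-1} y^{jq-1}`, and those lying in
`J_f` (`j ≥ 2`) are exactly the `f^{j-2} x^{2p-1} y^{2q-1}`.
-/

noncomputable section

def bideg (m n : ℕ) : Fin 2 →₀ ℕ := Finsupp.single 0 m + Finsupp.single 1 n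

@[simp] lemma bideg_apply_zero (m n : ℕ) : bideg m n 0 = m := by simp [bideg]

@[simp] lemma bideg_apply_one (m n : ℕ) : bideg m n 1 = n := by simp [bideg]

lemma bideg_ext {s t : Fin 2 →₀ ℕ} (h0 : s 0 = t 0) (h1 : s 1 = t 1) : s = t := by
  ext i; fin_cases i <;> assumption

lemma bideg_self (s : Fin 2 →₀ ℕ) : bideg (s 0) (s 1) = s :=
  bideg_ext (bideg_apply_zero _ _) (bideg_apply_one _ _)

lemma bideg_inj {m n m' n' : ℕ} : bideg m n = bideg m' n' ↔ m = m' ∧ n = n' :=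
  ⟨fun h => ⟨by simpa using congrArg (· 0) h, by simpa using congrArg (· 1) h⟩,
    fun ⟨hm, hn⟩ => hm ▸ hn ▸ rfl⟩

lemma X_zero_pow_mul_X_one_pow {R : Type*} [CommSemiring R] (m n : ℕ) :
    (X 0 ^ m * X 1 ^ n : MvPolynomial (Fin 2) R) = monomial (bideg m n) 1 := by
  rw [X_pow_eq_monomial, X_pow_eq_monomial, monomial_mul, one_mul, bideg]

lemma monomial_eq_monomial_of_ne_zero {R σ : Type*} [CommSemiring R] {s t : σ →₀ ℕ}
    {c d : R} (hcd : c = d) (hst : c ≠ 0 → s = t) : monomial s c = monomial t d := by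
  subst hcd
  by_cases hc : c = 0
  · simp [hc]
  · rw [hst hc]

def poisson {R : Type*} [CommRing R] (f : MvPolynomial (Fin 2) R) :
    MvPolynomial (Fin 2) R →ₗ[R] MvPolynomial (Fin 2) R :=
  LinearMap.mulLeft R (pderiv 0 f) ∘ₗ (pderiv 1).toLinearMap -
    LinearMap.mulLeft R (pderiv 1 f) ∘ₗ (pderiv 0).toLinearMap

lemma poisson_apply {R : Type*} [CommRing R] (f g : MvPolynomial (Fin 2) R) :
    poisson f g = pderiv 0 f * pderiv 1 g - pderiv 1 f * pderiv 0 g := rfl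

lemma dmem_iff_mem_range_poisson (f w : MvPolynomial (Fin 2) ℂ) :
    Dmem f w ↔ w ∈ LinearMap.range (poisson f) := by
  simp only [Dmem, LinearMap.mem_range, poisson_apply, eq_comm]

section Monomial

variable {p q : ℕ}

lemma poisson_monomial (hp : 1 ≤ p) (hq : 1 ≤ q) (s : Fin 2 →₀ ℕ) (c : ℂ) :
    poisson (monomial (bideg p q) 1) (monomial s c) =
      monomial (bideg (p - 1 + s 0) (q - 1 + s 1)) (c * (p * s 1 - q * s 0)) := by
  simp only [poisson_apply, pderiv_monomial, monomial_mul, mul_sub, map_sub]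
  congr 1 <;> refine monomial_eq_monomial_of_ne_zero (by simp; ring) fun hc => bideg_ext ?_ ?_
  all_goals simp at hc ⊢ <;> omega

lemma coeff_poisson_eq_zero_of_resonant (hp : 1 ≤ p) (hq : 1 ≤ q) {s : Fin 2 →₀ ℕ}
    (hs : p * (s 1 + 1) = q * (s 0 + 1)) (g : MvPolynomial (Fin 2) ℂ) :
    coeff s (poisson (monomial (bideg p q) 1) g) = 0 := by
  rw [g.as_sum, map_sum, coeff_sum]
  refine Finset.sum_eq_zero fun d _ => ?_
  rw [poisson_monomial hp hq, coeff_monomial]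
  split_ifs with hd
  · obtain ⟨h0, h1⟩ := bideg_inj.mp (hd.trans (bideg_self s).symm)
    have : p * d 1 = q * d 0 := by
      rw [← h0, ← h1] at hs
      have : p * (q - 1 + d 1 + 1) = p * q + p * d 1 := by
        rw [show q - 1 + d 1 + 1 = q + d 1 by omega]; ring
      have : q * (p - 1 + d 0 + 1) = p * q + q * d 0 := by
        rw [show p - 1 + d 0 + 1 = p + d 0 by omega]; ring
      omega
    rw [sub_eq_zero.mpr (by exact_mod_cast this), mul_zero]
  · rfl

def aevalMul (f g : MvPolynomial (Fin 2) ℂ) :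
    Polynomial ℂ →ₗ[ℂ] MvPolynomial (Fin 2) ℂ :=
  LinearMap.mulRight ℂ g ∘ₗ (Polynomial.aeval f).toLinearMap

lemma aevalMul_apply (f g : MvPolynomial (Fin 2) ℂ) (P : Polynomial ℂ) :
    aevalMul f g P = Polynomial.aeval f P * g := rfl

lemma aevalMul_monomial (p q n : ℕ) (c : ℂ) :
    aevalMul (monomial (bideg p q) 1) (monomial (bideg (2 * p - 1) (2 * q - 1)) 1)
        (Polynomial.monomial n c) =
      monomial (bideg (n * p + (2 * p - 1)) (n * q + (2 * q - 1))) c := by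
  rw [aevalMul_apply, Polynomial.aeval_monomial, monomial_pow, algebraMap_eq, mul_assoc,
    monomial_mul, C_mul_monomial, one_pow, one_mul, mul_one]
  congr 2
  exact bideg_ext (by simp) (by simp)

lemma coeff_aevalMul (hp : 1 ≤ p) (P : Polynomial ℂ) (k : ℕ) :
    coeff (bideg (k * p + (2 * p - 1)) (k * q + (2 * q - 1)))
        (aevalMul (monomial (bideg p q) 1) (monomial (bideg (2 * p - 1) (2 * q - 1)) 1) P) =
      P.coeff k := by
  induction P using Polynomial.induction_on' with
  | add P Q hP hQ => rw [map_add, coeff_add, hP, hQ, Polynomial.coeff_add]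
  | monomial n c =>
    rw [aevalMul_monomial, coeff_monomial, Polynomial.coeff_monomial]
    refine if_congr ?_ rfl rfl
    rw [bideg_inj]
    constructor
    · exact fun h => Nat.eq_of_mul_eq_mul_right hp (by omega)
    · rintro rfl; exact ⟨rfl, rfl⟩

lemma eq_zero_of_aevalMul_mem_range_poisson (hp : 1 ≤ p) (hq : 1 ≤ q) {P : Polynomial ℂ}
    (hP : aevalMul (monomial (bideg p q) 1) (monomial (bideg (2 * p - 1) (2 * q - 1)) 1) P ∈
      LinearMap.range (poisson (monomial (bideg p q) 1))) : P = 0 := by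
  obtain ⟨g, hg⟩ := hP
  ext k
  rw [← coeff_aevalMul hp, ← hg, coeff_poisson_eq_zero_of_resonant hp hq,
    Polynomial.coeff_zero]
  simp only [bideg_apply_zero, bideg_apply_one]
  have : p * (k * q + (2 * q - 1) + 1) = p * q * (k + 2) := by
    rw [show k * q + (2 * q - 1) + 1 = (k + 2) * q by rw [add_mul]; omega]; ring
  have : q * (k * p + (2 * p - 1) + 1) = p * q * (k + 2) := by
    rw [show k * p + (2 * p - 1) + 1 = (k + 2) * p by rw [add_mul]; omega]; ring
  omega

lemma monomial_mem_range_poisson (hp : 1 ≤ p) (hq : 1 ≤ q) {d : Fin 2 →₀ ℕ}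
    (h0 : p ≤ d 0 + 1) (h1 : q ≤ d 1 + 1) (hd : p * (d 1 + 1) ≠ q * (d 0 + 1)) (c : ℂ) :
    monomial d c ∈ LinearMap.range (poisson (monomial (bideg p q) 1)) := by
  set a := d 0 + 1 - p
  set b := d 1 + 1 - q
  have hne : (p * b - q * a : ℂ) ≠ 0 := by
    have : (p * b - q * a : ℂ) = ((p * (d 1 + 1) : ℕ) - (q * (d 0 + 1) : ℕ) : ℂ) := by
      simp only [a, b, Nat.cast_sub h0, Nat.cast_sub h1]; push_cast; ring
    rw [this, sub_ne_zero]
    exact_mod_cast hd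
  refine ⟨monomial (bideg a b) (c / (p * b - q * a)), ?_⟩
  rw [poisson_monomial hp hq, bideg_apply_zero, bideg_apply_one, div_mul_cancel₀ _ hne]
  congr 2
  exact bideg_ext (by simp only [bideg_apply_zero]; omega)
    (by simp only [bideg_apply_one]; omega)

lemma monomial_mem_range_aevalMul (hpq : Nat.Coprime p q) {d : Fin 2 →₀ ℕ}
    (hd : p * (d 1 + 1) = q * (d 0 + 1)) (hdeg : p + q ≤ d 0 + d 1 + 1) (c : ℂ) :
    monomial d c ∈ LinearMap.range
      (aevalMul (monomial (bideg p q) 1) (monomial (bideg (2 * p - 1) (2 * q - 1)) 1)) := by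
  obtain ⟨j, hj0⟩ : p ∣ d 0 + 1 := hpq.dvd_of_dvd_mul_left ⟨d 1 + 1, hd.symm⟩
  have hp : 0 < p := Nat.pos_of_ne_zero fun h => by simp [h] at hj0
  have hj1 : d 1 + 1 = q * j := Nat.eq_of_mul_eq_mul_left hp (by rw [hd, hj0]; ring)
  have hq : 0 < q := Nat.pos_of_ne_zero fun h => by simp [h] at hj1
  have hj : 2 ≤ j := by
    by_contra! hj
    interval_cases j <;> omega
  obtain ⟨n, rfl⟩ := Nat.exists_eq_add_of_le' hj
  refine ⟨Polynomial.monomial n c, ?_⟩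
  rw [aevalMul_monomial]
  congr 2
  refine bideg_ext ?_ ?_ <;> simp only [bideg_apply_zero, bideg_apply_one]
  · have : d 0 + 1 = n * p + 2 * p := by rw [hj0]; ring
    omega
  · have : d 1 + 1 = n * q + 2 * q := by rw [hj1]; ring
    omega

lemma exponent_bounds_of_mem_span_pderiv (hp : 1 ≤ p) (hq : 1 ≤ q)
    {h : MvPolynomial (Fin 2) ℂ} (hh : h ∈ Ideal.span
      {pderiv 0 (monomial (bideg p q) 1), pderiv 1 (monomial (bideg p q) 1)}) :
    ∀ d ∈ h.support, p ≤ d 0 + 1 ∧ q ≤ d 1 + 1 ∧ p + q ≤ d 0 + d 1 + 1 := by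
  induction hh using Submodule.span_induction with
  | mem x hx =>
    intro d hd
    rcases hx with rfl | rfl <;> rw [pderiv_monomial] at hd <;>
      obtain rfl := Finset.mem_singleton.mp (support_monomial_subset hd) <;> simp <;> omega
  | zero => simp
  | add x y _ _ hx hy =>
    intro d hd
    rcases Finset.mem_union.mp (support_add hd) with hd | hd
    exacts [hx d hd, hy d hd]
  | smul a x _ hx =>
    intro d hd
    obtain ⟨u, -, v, hv, rfl⟩ := Finset.mem_add.mp (support_mul a x hd)
    have := hx v hv
    simp only [Finsupp.add_apply]
    omega

lemma mem_range_poisson_sup_range_aevalMul (hp : 1 ≤ p) (hq : 1 ≤ q) (hpq : Nat.Coprime p q)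
    {h : MvPolynomial (Fin 2) ℂ}
    (hh : ∀ d ∈ h.support, p ≤ d 0 + 1 ∧ q ≤ d 1 + 1 ∧ p + q ≤ d 0 + d 1 + 1) :
    h ∈ LinearMap.range (poisson (monomial (bideg p q) 1)) ⊔
      LinearMap.range
        (aevalMul (monomial (bideg p q) 1) (monomial (bideg (2 * p - 1) (2 * q - 1)) 1)) := by
  rw [h.as_sum]
  refine Submodule.sum_mem _ fun d hd => ?_
  obtain ⟨h0, h1, hdeg⟩ := hh d hd
  by_cases hres : p * (d 1 + 1) = q * (d 0 + 1)
  · exact Submodule.mem_sup_right (monomial_mem_range_aevalMul hpq hres hdeg _)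
  · exact Submodule.mem_sup_left (monomial_mem_range_poisson hp hq h0 h1 hres _)

end Monomial

end

theorem statement12 (p q : ℕ) (hp : 1 ≤ p) (hq : 1 ≤ q) (hpq : Nat.Coprime p q) :
    ∀ h ∈ Ideal.span ({pderiv 0 (X 0 ^ p * X 1 ^ q), pderiv 1 (X 0 ^ p * X 1 ^ q)} :
        Set (MvPolynomial (Fin 2) ℂ)),
      ∃! P : Polynomial ℂ,
        Dmem (X 0 ^ p * X 1 ^ q)
          (h - Polynomial.aeval (X 0 ^ p * X 1 ^ q : MvPolynomial (Fin 2) ℂ) P *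
            (X 0 ^ (2 * p - 1) * X 1 ^ (2 * q - 1))) := by
  intro h hh
  simp only [X_zero_pow_mul_X_one_pow, dmem_iff_mem_range_poisson] at hh ⊢
  obtain ⟨w, hw, _, ⟨P, rfl⟩, rfl⟩ := Submodule.mem_sup.mp <|
    mem_range_poisson_sup_range_aevalMul hp hq hpq (exponent_bounds_of_mem_span_pderiv hp hq hh)
  refine ⟨P, by simpa [aevalMul_apply] using hw, fun P' hP' => ?_⟩
  refine (sub_eq_zero.mp (eq_zero_of_aevalMul_mem_range_poisson hp hq ?_)).symm
  convert sub_mem hP' hw using 1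
  rw [map_sub, aevalMul_apply _ _ P']
  abel
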